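/- Let V↑(H) be the triangular lattice of top endpoints of vertical edges of the hexagonal lattice H, and let T be the triangular lattice of face-centers of H. For any ξ ⊆ V↑(H) and any u, v ∈ ξ, the vertices u and v lie in the same connected component of the subgraph of V↑(H) induced by ξ if and only if the corners of the triangle of T corresponding to u are connected in the spanning subgraph (T, Δ(ξ)) to the corners of the triangle corresponding to v. In particular, ξ contains an infinite connected component (in V↑(H)) if and only if Δ(ξ) contains an infinite connected component (in T). -/

import Mathlib

noncomputable section

/-- The center of the face of the hexagonal lattice indexed by `(k, ℓ)`:
the point `k + ℓ e^{iπ/3}` of the triangular lattice. -/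
def triPt (k l : ℤ) : ℂ := (k : ℂ) + (l : ℂ) * Complex.exp (Real.pi * Complex.I / 3)

/-- The triangular lattice `{k + ℓ e^{iπ/3} : k, ℓ ∈ ℤ}` of face-centers of the
hexagonal lattice `H`. -/
def TriPts : Set ℂ := {z | ∃ k l : ℤ, z = triPt k l}

/-- Half of a vertical edge of the hexagonal lattice. -/
def hexOffset : ℂ := Complex.I / (Real.sqrt 3 : ℝ)

/-- The set `V↑(H)` of top endpoints of vertical edges of `H`. -/
def UpPts : Set ℂ := {z | ∃ w ∈ TriPts, z = w - hexOffset}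

/-- The triangular lattice `V↑(H)`, nearest neighbors (distance `1`) adjacent. -/
def UpGraph : SimpleGraph ↥UpPts where
  Adj u v := ‖(u : ℂ) - (v : ℂ)‖ = 1
  symm := by
    constructor
    intro u v h
    rw [norm_sub_rev]
    exact h
  loopless := by
    constructor
    intro v h
    simp only [sub_self, norm_zero] at h
    exact one_ne_zero h.symm

/-- The triangular lattice `T` of face-centers of `H`, nearest neighbors adjacent. -/
def TriGraph : SimpleGraph ↥TriPts where
  Adj u v := ‖(u : ℂ) - (v : ℂ)‖ = 1
  symm := by
    constructor
    intro u v h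
    rw [norm_sub_rev]
    exact h
  loopless := by
    constructor
    intro v h
    simp only [sub_self, norm_zero] at h
    exact one_ne_zero h.symm

/-- `z` is a corner of the upward triangle of `T` corresponding to `p ∈ V↑(H)`: one of the
three face-centers of `H` at distance `1/√3` from `p` (`p` belongs to exactly these three
faces of `H`). -/
def IsTriCorner (p : ↥UpPts) (z : ↥TriPts) : Prop :=
  ‖(z : ℂ) - (p : ℂ)‖ = 1 / Real.sqrt 3

/-- The bond percolation `Δ(ξ)` on `T`: all edges of `T` belonging to the upward triangular
faces corresponding to the vertices of `ξ`. -/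
def DeltaEdges (ξ : Set ↥UpPts) : Set (Sym2 ↥TriPts) :=
  {e | ∃ p ∈ ξ, ∃ z w : ↥TriPts, z ≠ w ∧ IsTriCorner p z ∧ IsTriCorner p w ∧ e = s(z, w)}

/-!
Two distinct vertices of `V↑(H)` are adjacent exactly when their triangles in `T` share a corner:
in lattice coordinates the corners of the triangle of `upPt v` are `v + d` for the three offsets
`d ∈ cornerOffsets`, and the pairwise differences of these offsets are exactly the six unit
vectors of `T`. Hence a path in `ξ` gives a chain of `Δ(ξ)`-triangles glued at corners, and a path
in `Δ(ξ)` gives a chain of vertices of `ξ` whose consecutive triangles share a corner; nothing else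
about the two lattices is used. For infinite components, note that `p ↦ p + i/√3` picks a corner
of each triangle injectively, and that each triangle has only finitely many corners.
-/

section CornerGraph

open SimpleGraph

variable {α β : Type*} {C : α → β → Prop} {ξ : Set α}

variable (C ξ) in
def cornerEdges : Set (Sym2 β) :=
  {e | ∃ p ∈ ξ, ∃ z w, z ≠ w ∧ C p z ∧ C p w ∧ e = s(z, w)}

variable (C ξ) in
abbrev cornerGraph : SimpleGraph β := fromEdgeSet (cornerEdges C ξ)

lemma cornerGraph_reachable {p : α} (hp : p ∈ ξ) {z w : β} (hz : C p z) (hw : C p w) :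
    (cornerGraph C ξ).Reachable z w := by
  rcases eq_or_ne z w with rfl | hne
  · rfl
  · exact Adj.reachable ((fromEdgeSet_adj _).2 ⟨⟨p, hp, z, w, hne, hz, hw, rfl⟩, hne⟩)

lemma exists_corner_of_cornerGraph_adj {z w : β} (h : (cornerGraph C ξ).Adj z w) :
    ∃ p ∈ ξ, C p z ∧ C p w := by
  obtain ⟨⟨p, hp, a, b, -, ha, hb, he⟩, -⟩ := (fromEdgeSet_adj _).1 h
  rcases Sym2.eq_iff.1 he with ⟨rfl, rfl⟩ | ⟨rfl, rfl⟩
  exacts [⟨p, hp, ha, hb⟩, ⟨p, hp, hb, ha⟩]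

lemma exists_corner_of_mem_infinite_supp {c : (cornerGraph C ξ).ConnectedComponent}
    (hc : c.supp.Infinite) {z : β} (hz : z ∈ c.supp) : ∃ p ∈ ξ, C p z := by
  obtain ⟨z', hz', hne⟩ := (hc.sdiff (Set.finite_singleton z)).nonempty
  obtain ⟨W⟩ := c.reachable_of_mem_supp hz hz'
  obtain ⟨p, hp, hpz, -⟩ :=
    exists_corner_of_cornerGraph_adj (W.adj_snd (Walk.not_nil_of_ne (Ne.symm hne)))
  exact ⟨p, hp, hpz⟩

variable {G : SimpleGraph α}

lemma cornerGraph_reachable_of_induce_reachable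
    (hcommon : ∀ p q, G.Adj p q → ∃ z, C p z ∧ C q z) {a b : ξ}
    (h : (G.induce ξ).Reachable a b) {z w : β} (hz : C a z) (hw : C b w) :
    (cornerGraph C ξ).Reachable z w := by
  obtain ⟨W⟩ := h
  induction W generalizing z with
  | @nil a => exact cornerGraph_reachable a.2 hz hw
  | @cons a c _ hac _ ih =>
    obtain ⟨y, hay, hcy⟩ := hcommon _ _ hac
    exact (cornerGraph_reachable a.2 hz hay).trans (ih hcy hw)

lemma induce_reachable_of_common_corner
    (hadj : ∀ p q z, p ≠ q → C p z → C q z → G.Adj p q) {p q : α} (hp : p ∈ ξ) (hq : q ∈ ξ)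
    {z : β} (hpz : C p z) (hqz : C q z) : (G.induce ξ).Reachable ⟨p, hp⟩ ⟨q, hq⟩ := by
  rcases eq_or_ne p q with rfl | hne
  · rfl
  · exact Adj.reachable (induce_adj.2 (hadj _ _ _ hne hpz hqz))

lemma induce_reachable_of_cornerGraph_reachable
    (hadj : ∀ p q z, p ≠ q → C p z → C q z → G.Adj p q) {z w : β}
    (h : (cornerGraph C ξ).Reachable z w) {p q : α} (hp : p ∈ ξ) (hq : q ∈ ξ)
    (hz : C p z) (hw : C q w) : (G.induce ξ).Reachable ⟨p, hp⟩ ⟨q, hq⟩ := by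
  obtain ⟨W⟩ := h
  induction W generalizing p with
  | nil => exact induce_reachable_of_common_corner hadj hp hq hz hw
  | cons hzy _ ih =>
    obtain ⟨r, hr, hrz, hry⟩ := exists_corner_of_cornerGraph_adj hzy
    exact (induce_reachable_of_common_corner hadj hp hr hz hrz).trans (ih hr hry hw)

theorem induce_reachable_iff_cornerGraph_reachable
    (hcommon : ∀ p q, G.Adj p q → ∃ z, C p z ∧ C q z)
    (hadj : ∀ p q z, p ≠ q → C p z → C q z → G.Adj p q) (hC : ∀ p, ∃ z, C p z)
    {p q : α} (hp : p ∈ ξ) (hq : q ∈ ξ) :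
    (G.induce ξ).Reachable ⟨p, hp⟩ ⟨q, hq⟩ ↔
      ∀ z w, C p z → C q w → (cornerGraph C ξ).Reachable z w := by
  refine ⟨fun h z w ↦ cornerGraph_reachable_of_induce_reachable hcommon h, fun h ↦ ?_⟩
  obtain ⟨z, hz⟩ := hC p
  obtain ⟨w, hw⟩ := hC q
  exact induce_reachable_of_cornerGraph_reachable hadj (h z w hz hw) hp hq hz hw

lemma exists_infinite_cornerGraph_component (hcommon : ∀ p q, G.Adj p q → ∃ z, C p z ∧ C q z)
    {f : α → β} (hf : f.Injective) (hfC : ∀ p, C p (f p))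
    {c : (G.induce ξ).ConnectedComponent} (hc : c.supp.Infinite) :
    ∃ c' : (cornerGraph C ξ).ConnectedComponent, c'.supp.Infinite := by
  obtain ⟨x, hx⟩ := hc.nonempty
  refine ⟨(cornerGraph C ξ).connectedComponentMk (f x), ?_⟩
  refine (hc.image (hf.comp Subtype.val_injective).injOn).mono ?_
  rintro _ ⟨y, hy, rfl⟩
  exact ConnectedComponent.sound (cornerGraph_reachable_of_induce_reachable hcommon
    (c.reachable_of_mem_supp hy hx) (hfC y) (hfC x))

lemma exists_infinite_induce_component (hadj : ∀ p q z, p ≠ q → C p z → C q z → G.Adj p q)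
    (hfin : ∀ p, {z | C p z}.Finite)
    {c : (cornerGraph C ξ).ConnectedComponent} (hc : c.supp.Infinite) :
    ∃ c' : (G.induce ξ).ConnectedComponent, c'.supp.Infinite := by
  obtain ⟨z₀, hz₀⟩ := hc.nonempty
  obtain ⟨p₀, hp₀, hpz₀⟩ := exists_corner_of_mem_infinite_supp hc hz₀
  refine ⟨(G.induce ξ).connectedComponentMk ⟨p₀, hp₀⟩, fun hfin' ↦ hc ?_⟩
  refine (hfin'.biUnion fun p _ ↦ hfin p).subset fun z hz ↦ ?_
  obtain ⟨p, hp, hpz⟩ := exists_corner_of_mem_infinite_supp hc hz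
  refine Set.mem_biUnion (show (⟨p, hp⟩ : ξ) ∈ _ from ?_) hpz
  exact ConnectedComponent.sound (induce_reachable_of_cornerGraph_reachable hadj
    (c.reachable_of_mem_supp hz hz₀) hp hp₀ hpz hpz₀)

end CornerGraph

def triNormSq (v : ℤ × ℤ) : ℤ := v.1 ^ 2 + v.1 * v.2 + v.2 ^ 2

def cornerOffsets : Finset (ℤ × ℤ) := {(0, 0), (0, -1), (1, -1)}

lemma mem_cornerOffsets_iff {v : ℤ × ℤ} : v ∈ cornerOffsets ↔ triNormSq v + v.2 = 0 := by
  obtain ⟨m, n⟩ := v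
  constructor
  · intro h
    simp only [cornerOffsets, Finset.mem_insert, Finset.mem_singleton, Prod.mk.injEq] at h
    rcases h with ⟨rfl, rfl⟩ | ⟨rfl, rfl⟩ | ⟨rfl, rfl⟩ <;> rfl
  · intro h
    simp only [triNormSq] at h
    have key : 3 * (2 * m + n) ^ 2 + (3 * n + 2) ^ 2 = 4 := by linear_combination 12 * h
    have hn : -1 ≤ n ∧ n ≤ 0 := by constructor <;> nlinarith [sq_nonneg (2 * m + n)]
    have hm : -1 ≤ m ∧ m ≤ 1 := by constructor <;> nlinarith [sq_nonneg (3 * n + 2)]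
    obtain ⟨hn₁, hn₂⟩ := hn
    obtain ⟨hm₁, hm₂⟩ := hm
    interval_cases m <;> interval_cases n <;> simp_all [cornerOffsets]

lemma triNormSq_sub_of_mem_cornerOffsets :
    ∀ d ∈ cornerOffsets, ∀ d' ∈ cornerOffsets, d ≠ d' → triNormSq (d - d') = 1 := by
  decide

lemma exists_cornerOffsets_sub_of_triNormSq_eq_one {v : ℤ × ℤ} (h : triNormSq v = 1) :
    ∃ d ∈ cornerOffsets, ∃ d' ∈ cornerOffsets, v = d - d' := by
  obtain ⟨m, n⟩ := v
  simp only [triNormSq] at h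
  have hn : -1 ≤ n ∧ n ≤ 1 := by constructor <;> nlinarith [sq_nonneg (2 * m + n)]
  have hm : -1 ≤ m ∧ m ≤ 1 := by constructor <;> nlinarith [sq_nonneg (2 * n + m)]
  obtain ⟨hn₁, hn₂⟩ := hn
  obtain ⟨hm₁, hm₂⟩ := hm
  interval_cases m <;> interval_cases n <;> first | omega | decide

lemma cexp_pi_mul_I_div_three : Complex.exp (Real.pi * Complex.I / 3) = ⟨1 / 2, √3 / 2⟩ := by
  have h : (Real.pi : ℂ) * Complex.I / 3 = ((Real.pi / 3 : ℝ) : ℂ) * Complex.I := by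
    push_cast; ring
  rw [h, Complex.exp_mul_I, ← Complex.ofReal_cos, ← Complex.ofReal_sin]
  apply Complex.ext <;> simp [Real.cos_pi_div_three, Real.sin_pi_div_three]

lemma hexOffset_eq : hexOffset = ⟨0, (√3)⁻¹⟩ :=
  Complex.ext (by simp [hexOffset, Complex.div_ofReal_re])
    (by simp [hexOffset, Complex.div_ofReal_im])

lemma triPt_sub_triPt (a b k l : ℤ) : triPt a b - triPt k l = triPt (a - k) (b - l) := by
  simp only [triPt]; push_cast; ring

lemma normSq_triPt (v : ℤ × ℤ) : Complex.normSq (triPt v.1 v.2) = triNormSq v := by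
  have h3 : √3 ^ 2 = 3 := Real.sq_sqrt (by norm_num)
  simp only [triPt, cexp_pi_mul_I_div_three, triNormSq, Complex.normSq_apply, Complex.add_re,
    Complex.add_im, Complex.mul_re, Complex.mul_im, Complex.intCast_re, Complex.intCast_im]
  push_cast
  linear_combination ((v.2 : ℝ) ^ 2 / 4) * h3

lemma normSq_triPt_add_hexOffset (v : ℤ × ℤ) :
    Complex.normSq (triPt v.1 v.2 + hexOffset) = ((triNormSq v + v.2 : ℤ) : ℝ) + 1 / 3 := by
  have h3 : √3 ^ 2 = 3 := Real.sq_sqrt (by norm_num)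
  have h3' : √3 ≠ 0 := by positivity
  simp only [triPt, cexp_pi_mul_I_div_three, hexOffset_eq, triNormSq, Complex.normSq_apply,
    Complex.add_re, Complex.add_im, Complex.mul_re, Complex.mul_im, Complex.intCast_re,
    Complex.intCast_im]
  push_cast
  field_simp
  linear_combination (3 * (v.2 : ℝ) ^ 2 * √3 ^ 2 - 4) * h3

lemma norm_eq_iff_normSq_eq {x : ℂ} {r : ℝ} (hr : 0 ≤ r) :
    ‖x‖ = r ↔ Complex.normSq x = r ^ 2 := by
  rw [← Complex.sq_norm, pow_left_inj₀ (norm_nonneg x) hr two_ne_zero]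

def triVert (v : ℤ × ℤ) : ↥TriPts := ⟨triPt v.1 v.2, v.1, v.2, rfl⟩

def upPt (v : ℤ × ℤ) : ↥UpPts := ⟨triPt v.1 v.2 - hexOffset, _, (triVert v).2, rfl⟩

lemma triVert_surjective : Function.Surjective triVert := by
  rintro ⟨_, k, l, rfl⟩
  exact ⟨(k, l), rfl⟩

lemma upPt_surjective : Function.Surjective upPt := by
  rintro ⟨_, _, ⟨k, l, rfl⟩, rfl⟩
  exact ⟨(k, l), rfl⟩

lemma isTriCorner_upPt_triVert {v w : ℤ × ℤ} :
    IsTriCorner (upPt v) (triVert w) ↔ w - v ∈ cornerOffsets := by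
  have h : (triVert w : ℂ) - upPt v = triPt (w - v).1 (w - v).2 + hexOffset := by
    simp only [triVert, upPt, Prod.fst_sub, Prod.snd_sub, ← triPt_sub_triPt]; ring
  rw [IsTriCorner, h, norm_eq_iff_normSq_eq (by positivity), normSq_triPt_add_hexOffset,
    mem_cornerOffsets_iff, div_pow, Real.sq_sqrt (by norm_num : (0 : ℝ) ≤ 3), one_pow,
    add_eq_right, Int.cast_eq_zero]

lemma upGraph_adj_upPt {v w : ℤ × ℤ} :
    UpGraph.Adj (upPt v) (upPt w) ↔ triNormSq (v - w) = 1 := by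
  have h : (upPt v : ℂ) - upPt w = triPt (v - w).1 (v - w).2 := by
    simp only [upPt, Prod.fst_sub, Prod.snd_sub, ← triPt_sub_triPt]; ring
  change ‖(upPt v : ℂ) - upPt w‖ = 1 ↔ _
  rw [h, norm_eq_iff_normSq_eq zero_le_one, normSq_triPt, one_pow]
  exact_mod_cast Iff.rfl

lemma upGraph_adj_of_isTriCorner {p q : ↥UpPts} {z : ↥TriPts} (hpq : p ≠ q)
    (hp : IsTriCorner p z) (hq : IsTriCorner q z) : UpGraph.Adj p q := by
  obtain ⟨v, rfl⟩ := upPt_surjective p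
  obtain ⟨v', rfl⟩ := upPt_surjective q
  obtain ⟨w, rfl⟩ := triVert_surjective z
  rw [isTriCorner_upPt_triVert] at hp hq
  rw [upGraph_adj_upPt]
  have hne : w - v' ≠ w - v := fun h ↦ hpq (by rw [sub_right_inj.1 h])
  simpa using triNormSq_sub_of_mem_cornerOffsets _ hq _ hp hne

lemma exists_isTriCorner_of_upGraph_adj {p q : ↥UpPts} (h : UpGraph.Adj p q) :
    ∃ z, IsTriCorner p z ∧ IsTriCorner q z := by
  obtain ⟨v, rfl⟩ := upPt_surjective p
  obtain ⟨v', rfl⟩ := upPt_surjective q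
  obtain ⟨d, hd, d', hd', hvv'⟩ :=
    exists_cornerOffsets_sub_of_triNormSq_eq_one (upGraph_adj_upPt.1 h)
  refine ⟨triVert (v + d'), ?_, ?_⟩ <;> rw [isTriCorner_upPt_triVert]
  · simpa using hd'
  · rwa [show v + d' - v' = d by rw [add_sub_right_comm, hvv', sub_add_cancel]]

lemma finite_setOf_isTriCorner (p : ↥UpPts) : {z | IsTriCorner p z}.Finite := by
  obtain ⟨v, rfl⟩ := upPt_surjective p
  refine (cornerOffsets.finite_toSet.image fun d ↦ triVert (v + d)).subset fun z hz ↦ ?_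
  obtain ⟨w, rfl⟩ := triVert_surjective z
  exact ⟨w - v, isTriCorner_upPt_triVert.1 hz, by simp⟩

def topCorner (p : ↥UpPts) : ↥TriPts :=
  ⟨p + hexOffset, by obtain ⟨w, hw, hpw⟩ := p.2; simpa [hpw] using hw⟩

lemma topCorner_injective : Function.Injective topCorner :=
  fun _ _ h ↦ Subtype.ext (add_right_cancel (congrArg Subtype.val h))

lemma isTriCorner_topCorner (p : ↥UpPts) : IsTriCorner p (topCorner p) := by
  obtain ⟨v, rfl⟩ := upPt_surjective p
  have : topCorner (upPt v) = triVert v := Subtype.ext (sub_add_cancel _ _)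
  rw [this, isTriCorner_upPt_triVert, sub_self]
  decide

/-- For `ξ ⊆ V↑(H)` and `u, v ∈ ξ`: `u` and `v` lie in the same connected
component of the subgraph of `V↑(H)` induced by `ξ` if and only if the corners of the triangle
of `T` corresponding to `u` are connected, in the spanning subgraph `(T, Δ(ξ))`, to the corners
of the triangle corresponding to `v`.  In particular, `ξ` contains an infinite connected
component if and only if `Δ(ξ)` does. -/
theorem delta_connectivity (ξ : Set ↥UpPts) :
    (∀ (u v : ↥UpPts) (hu : u ∈ ξ) (hv : v ∈ ξ),
      (UpGraph.induce ξ).Reachable ⟨u, hu⟩ ⟨v, hv⟩ ↔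
        ∀ z w : ↥TriPts, IsTriCorner u z → IsTriCorner v w →
          (SimpleGraph.fromEdgeSet (DeltaEdges ξ)).Reachable z w) ∧
    ((∃ c : (UpGraph.induce ξ).ConnectedComponent, c.supp.Infinite) ↔
      (∃ c : (SimpleGraph.fromEdgeSet (DeltaEdges ξ)).ConnectedComponent, c.supp.Infinite)) := by
  have hcommon : ∀ p q, UpGraph.Adj p q → ∃ z, IsTriCorner p z ∧ IsTriCorner q z :=
    fun _ _ ↦ exists_isTriCorner_of_upGraph_adj
  have hadj : ∀ p q z, p ≠ q → IsTriCorner p z → IsTriCorner q z → UpGraph.Adj p q :=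
    fun _ _ _ ↦ upGraph_adj_of_isTriCorner
  exact ⟨fun _ _ hu hv ↦ induce_reachable_iff_cornerGraph_reachable hcommon hadj
      (fun p ↦ ⟨_, isTriCorner_topCorner p⟩) hu hv,
    fun ⟨_, hc⟩ ↦ exists_infinite_cornerGraph_component hcommon topCorner_injective
      isTriCorner_topCorner hc,
    fun ⟨_, hc⟩ ↦ exists_infinite_induce_component hadj finite_setOf_isTriCorner hc⟩
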